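/- arXiv:2011.03687 — 3 statements merged into one kernel-verified Lean document; each statement's English description precedes it below -/
import Mathlib

section
/- Binary decoupling of the variational difference under label noise: for any bounded functions g⁺, g⁻: 𝒳 → ℝ (representing g(h(x), +1) and g(h(x), −1)), any function φ: ℝ → ℝ (playing the role of f*), any probability measure μ on 𝒳, clean label probabilities p = P(Y=+1), noise rates e₊ = P(Ỹ=−1 | Y=+1) and e₋ = P(Ỹ=+1 | Y=−1), and letting p̃ = p(1−e₊) + (1−p)e₋, the noisy variational difference d̃ = p·E_{X|Y=+1}[(1−e₊)g⁺ + e₊g⁻] + (1−p)·E_{X|Y=−1}[(1−e₋)g⁻ + e₋g⁺] − p̃·E_X[φ∘g⁺] − (1−p̃)·E_X[φ∘g⁻] equals (1−e₊−e₋)·d + Bias, where d = p·E_{X|Y=+1}[g⁺] + (1−p)·E_{X|Y=−1}[g⁻] − p·E_X[φ∘g⁺] − (1−p)·E_X[φ∘g⁻] is the clean variational difference and Bias = e₊·(E_X[g⁻] − E_X[φ∘g⁻]) + e₋·(E_X[g⁺] − E_X[φ∘g⁺]). -/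
open MeasureTheory

/-- Binary decoupling of the variational difference under label noise:
the noisy variational difference equals `(1 − e₊ − e₋)` times the clean one plus
the bias term `e₊·(E[g⁻] − E[φ∘g⁻]) + e₋·(E[g⁺] − E[φ∘g⁺])`, where `E` denotes
expectation under the mixture `p·μ₊ + (1−p)·μ₋`. -/
theorem stmt_4 {X : Type*} [MeasurableSpace X]
    (μp μm : Measure X) [IsProbabilityMeasure μp] [IsProbabilityMeasure μm]
    (gp gm : X → ℝ) (φ : ℝ → ℝ) (p ep em : ℝ)
    (hp0 : 0 ≤ p) (hp1 : p ≤ 1) (hep0 : 0 ≤ ep) (hem0 : 0 ≤ em) (he : ep + em < 1)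
    (hbdd : ∃ M : ℝ, ∀ x, |gp x| ≤ M ∧ |gm x| ≤ M)
    (hgpp : Integrable gp μp) (hgmp : Integrable gm μp)
    (hgpm : Integrable gp μm) (hgmm : Integrable gm μm)
    (EX : (X → ℝ) → ℝ)
    (hEX : ∀ f : X → ℝ, EX f = p * ∫ x, f x ∂μp + (1 - p) * ∫ x, f x ∂μm)
    (ptld : ℝ) (hptld : ptld = p * (1 - ep) + (1 - p) * em) :
    p * (∫ x, ((1 - ep) * gp x + ep * gm x) ∂μp)
      + (1 - p) * (∫ x, ((1 - em) * gm x + em * gp x) ∂μm)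
      - ptld * EX (fun x => φ (gp x)) - (1 - ptld) * EX (fun x => φ (gm x))
    = (1 - ep - em) *
        (p * (∫ x, gp x ∂μp) + (1 - p) * (∫ x, gm x ∂μm)
          - p * EX (fun x => φ (gp x)) - (1 - p) * EX (fun x => φ (gm x)))
      + (ep * (EX gm - EX (fun x => φ (gm x)))
          + em * (EX gp - EX (fun x => φ (gp x)))) := by
  rw [integral_add (hgpp.const_mul _) (hgmp.const_mul _),
      integral_add (hgmm.const_mul _) (hgpm.const_mul _),
      MeasureTheory.integral_const_mul, MeasureTheory.integral_const_mul, MeasureTheory.integral_const_mul, MeasureTheory.integral_const_mul,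
      hEX gp, hEX gm, hptld]
  ring
end

section
/- Multi-class uniform off-diagonal decoupling: with K classes, noise rates e₁,…,e_K with T_{i,j} = e_j for i ≠ j and T_{i,i} = 1 − Σ_{j≠i} e_j, for any functions g_j: 𝒳 → ℝ (j = 1,…,K), φ: ℝ → ℝ, clean class probabilities p_i, and noisy class probabilities p̃_i = (1 − Σ_j e_j)·p_i + e_i, the noisy variational difference Σ_i p_i·E_{X|Y=i}[Σ_j T_{i,j} g_j] − Σ_i p̃_i·E_X[φ∘g_i] equals (1 − Σ_j e_j)·(Σ_i p_i·E_{X|Y=i}[g_i] − Σ_i p_i·E_X[φ∘g_i]) + Σ_j e_j·(E_X[g_j] − E_X[φ∘g_j]). -/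
open MeasureTheory

/-- Multi-class uniform off-diagonal decoupling: with transition matrix
`T i j = e j` for `i ≠ j` and `T i i = 1 − ∑_{j ≠ i} e j`, the noisy variational
difference equals `(1 − ∑ e j)` times the clean one plus the bias term
`∑ j, e j · (E[g j] − E[φ ∘ g j])`. -/
theorem stmt_5 {X : Type*} [MeasurableSpace X] {K : ℕ}
    (μ : Fin K → Measure X) [∀ i, IsProbabilityMeasure (μ i)]
    (g : Fin K → X → ℝ) (φ : ℝ → ℝ) (p e : Fin K → ℝ)
    (hp0 : ∀ i, 0 ≤ p i) (hp1 : ∑ i, p i = 1)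
    (he0 : ∀ j, 0 ≤ e j) (he1 : ∑ j, e j < 1)
    (hint : ∀ i j, Integrable (g j) (μ i))
    (T : Fin K → Fin K → ℝ)
    (hT : ∀ i j, T i j =
      if i = j then 1 - ∑ j' ∈ Finset.univ.erase i, e j' else e j)
    (pt : Fin K → ℝ) (hpt : ∀ i, pt i = (1 - ∑ j, e j) * p i + e i)
    (EX : (X → ℝ) → ℝ) (hEX : ∀ f : X → ℝ, EX f = ∑ i, p i * ∫ x, f x ∂(μ i)) :
    (∑ i, p i * ∫ x, (∑ j, T i j * g j x) ∂(μ i))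
      - ∑ i, pt i * EX (fun x => φ (g i x))
    = (1 - ∑ j, e j) *
        ((∑ i, p i * ∫ x, g i x ∂(μ i)) - ∑ i, p i * EX (fun x => φ (g i x)))
      + ∑ j, e j * (EX (g j) - EX (fun x => φ (g j x))) := by

  have key : ∀ (c : Fin K → ℝ) (i : Fin K),
      ∑ j, T i j * c j = (1 - ∑ j, e j) * c i + ∑ j, e j * c j := by
    intro c i
    rw [← Finset.add_sum_erase _ _ (Finset.mem_univ i), hT]
    have h1 : ∑ j ∈ Finset.univ.erase i, T i j * c j
        = ∑ j ∈ Finset.univ.erase i, e j * c j := by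
      refine Finset.sum_congr rfl fun j hj => ?_
      rw [hT]
      simp [Finset.ne_of_mem_erase hj, (Finset.ne_of_mem_erase hj).symm]
    rw [h1, Finset.sum_erase_eq_sub (Finset.mem_univ i),
        Finset.sum_erase_eq_sub (f := fun j => e j * c j) (Finset.mem_univ i)]
    simp only [eq_self_iff_true, if_true]
    ring
  have hI : ∀ i, ∫ x, (∑ j, T i j * g j x) ∂(μ i)
      = (1 - ∑ j, e j) * ∫ x, g i x ∂(μ i)
        + ∑ j, e j * ∫ x, g j x ∂(μ i) := by
    intro i
    rw [MeasureTheory.integral_finset_sum _ (fun j _ => (hint i j).const_mul _)]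
    simp only [MeasureTheory.integral_const_mul]
    exact key (fun j => ∫ x, g j x ∂(μ i)) i
  simp only [hI, hpt, hEX (g _)]
  have hswap : ∑ i, p i * ∑ j, e j * ∫ x, g j x ∂(μ i)
      = ∑ j, e j * ∑ i, p i * ∫ x, g j x ∂(μ i) := by
    simp only [Finset.mul_sum]
    rw [Finset.sum_comm]
    exact Finset.sum_congr rfl fun j _ => Finset.sum_congr rfl fun i _ => by ring
  simp only [mul_add, Finset.sum_add_distrib, add_mul, hswap, mul_sub,
    Finset.sum_sub_distrib, Finset.mul_sum]
  ring_nf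
  have h2 : ∑ x, (-((p x * ∑ j, e j) * ∫ y, g x y ∂(μ x)) + p x * ∫ y, g x y ∂(μ x))
      = ∑ x, (1 - ∑ j, e j) * p x * ∫ y, g x y ∂(μ x) :=
    Finset.sum_congr rfl fun x _ => by ring
  have h3 : ∑ x, ∑ y, p x * e y * ∫ z, g y z ∂(μ x)
      = ∑ x, ∑ y, e x * p y * ∫ z, g x z ∂(μ y) := by
    rw [Finset.sum_comm]
    exact Finset.sum_congr rfl fun x _ => Finset.sum_congr rfl fun y _ => by ring
  rw [h2, h3]
  ring
end

section
/- Let f: (0,∞) → ℝ be convex with f(1) = 0 and suppose f(v) is monotonically increasing as a function of |v−1| (i.e., f(v₁) ≤ f(v₂) whenever |v₁−1| ≤ |v₂−1|). In binary classification with balanced Bayes labels P(Y*=+1) = P(Y*=−1) = 1/2, the f-divergence between the joint distribution of (h(X), Y*) and the product of its marginals, D_f = Σ_{y,y'} P(h(X)=y, Y*=y')·f(P(h(X)=y, Y*=y')/(P(h(X)=y)·P(Y*=y'))), is maximized by the Bayes optimal classifier h* = Y*, with value D_f = f(2). -/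
open MeasureTheory

/-- For a convex generator `f` with `f 1 = 0` that is monotonically increasing
in `|v − 1|`, and balanced Bayes labels `Y*`, the f-divergence between the joint
distribution of `(h(X), Y*)` and the product of its marginals is maximized by
the Bayes optimal classifier `h* = Y*`, with maximal value `f 2`. -/
theorem stmt_14 {Ω : Type*} [MeasurableSpace Ω] (μ : Measure Ω)
    [IsProbabilityMeasure μ] (f : ℝ → ℝ)
    (hconv : ConvexOn ℝ (Set.Ioi (0 : ℝ)) f) (hf1 : f 1 = 0)
    (hmono : ∀ v₁ v₂ : ℝ, 0 < v₁ → 0 < v₂ → |v₁ - 1| ≤ |v₂ - 1| → f v₁ ≤ f v₂)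
    (Ys Hs : Ω → ℤ) (hYs : Measurable Ys)
    (hYr : ∀ ω, Ys ω = 1 ∨ Ys ω = -1)
    (hbal1 : (μ {ω | Ys ω = 1}).toReal = 1/2)
    (hbal2 : (μ {ω | Ys ω = -1}).toReal = 1/2)
    (hHs : ∀ ω, Hs ω = Ys ω)
    (Df : (Ω → ℤ) → ℝ)
    (hDf : ∀ C : Ω → ℤ, Df C =
      ∑ y ∈ ({-1, 1} : Finset ℤ), ∑ y' ∈ ({-1, 1} : Finset ℤ),
        (μ {ω | C ω = y ∧ Ys ω = y'}).toReal *
          f ((μ {ω | C ω = y ∧ Ys ω = y'}).toReal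
            / ((μ {ω | C ω = y}).toReal * (μ {ω | Ys ω = y'}).toReal))) :
    (∀ C : Ω → ℤ, Measurable C → (∀ ω, C ω = 1 ∨ C ω = -1) →
      (∀ y : ℤ, (y = 1 ∨ y = -1) → 0 < (μ {ω | C ω = y}).toReal) →
      Df C ≤ Df Hs) ∧
    Df Hs = f 2 := by
  have hne : ((-1 : ℤ)) ≠ 1 := by norm_num
  -- Df Hs = f 2
  have hcross1 : {ω | Hs ω = (-1:ℤ) ∧ Ys ω = 1} = (∅ : Set Ω) := by
    ext ω; simp [hHs ω]; omega
  have hcross2 : {ω | Hs ω = (1:ℤ) ∧ Ys ω = -1} = (∅ : Set Ω) := by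
    ext ω; simp [hHs ω]; omega
  have hdiag1 : {ω | Hs ω = (-1:ℤ) ∧ Ys ω = -1} = {ω | Ys ω = (-1:ℤ)} := by
    ext ω; simp [hHs ω]
  have hdiag2 : {ω | Hs ω = (1:ℤ) ∧ Ys ω = 1} = {ω | Ys ω = (1:ℤ)} := by
    ext ω; simp [hHs ω]
  have hHm1 : {ω | Hs ω = (-1:ℤ)} = {ω | Ys ω = (-1:ℤ)} := by ext ω; simp [hHs ω]
  have hH1 : {ω | Hs ω = (1:ℤ)} = {ω | Ys ω = (1:ℤ)} := by ext ω; simp [hHs ω]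
  have hDfHs : Df Hs = f 2 := by
    rw [hDf Hs, Finset.sum_pair hne, Finset.sum_pair hne, Finset.sum_pair hne,
      hcross1, hcross2, hdiag1, hdiag2, hHm1, hH1, hbal1, hbal2]
    norm_num
    ring
  refine ⟨?_, hDfHs⟩
  intro C hC hCr hCpos
  -- f 2 ≥ 0
  have hf2 : 0 ≤ f 2 := by
    have := hmono 1 2 one_pos two_pos (by norm_num)
    linarith [hf1 ▸ this]
  -- key pointwise bound
  have key : ∀ p q : ℝ, 0 ≤ p → p ≤ q → 0 < q → p * f (p / (q * (1/2))) ≤ p * f 2 := by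
    intro p q hp hpq hq
    rcases eq_or_lt_of_le hp with h | h
    · simp [← h]
    · refine mul_le_mul_of_nonneg_left ?_ hp
      refine hmono _ 2 (by positivity) (by norm_num) ?_
      have hle : p / (q * (1/2)) ≤ 2 := by
        rw [div_le_iff₀ (by positivity)]; linarith
      have hge : 0 < p / (q * (1/2)) := by positivity
      rw [abs_le]
      constructor <;> [skip; skip] <;> rw [abs_of_nonneg (by norm_num : (0:ℝ) ≤ 2 - 1)] <;>
        linarith
  -- splitting by Ys value
  have hYmeas : ∀ y : ℤ, MeasurableSet {ω | Ys ω = y} := fun y =>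
    hYs (measurableSet_singleton y)
  have hCmeas : ∀ y : ℤ, MeasurableSet {ω | C ω = y} := fun y =>
    hC (measurableSet_singleton y)
  have hsplit : ∀ S : Set Ω, MeasurableSet S →
      (μ (S ∩ {ω | Ys ω = 1})).toReal + (μ (S ∩ {ω | Ys ω = -1})).toReal
        = (μ S).toReal := by
    intro S hS
    have hset : S ∩ {ω | Ys ω = 1} ∪ S ∩ {ω | Ys ω = -1} = S := by
      ext ω
      simp only [Set.mem_union, Set.mem_inter_iff, Set.mem_setOf_eq]
      rcases hYr ω with h | h <;> simp [h]
    have hdisj : Disjoint (S ∩ {ω | Ys ω = 1}) (S ∩ {ω | Ys ω = -1}) := by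
      rw [Set.disjoint_left]
      rintro ω ⟨-, h1⟩ ⟨-, h2⟩
      simp only [Set.mem_setOf_eq] at h1 h2
      omega
    rw [← ENNReal.toReal_add (measure_ne_top _ _) (measure_ne_top _ _),
      ← measure_union hdisj (hS.inter (hYmeas _)), hset]
  have hinter : ∀ y y' : ℤ, {ω | C ω = y ∧ Ys ω = y'} = {ω | C ω = y} ∩ {ω | Ys ω = y'} :=
    fun y y' => rfl
  have hsum1 : (μ {ω | C ω = (1:ℤ) ∧ Ys ω = 1}).toReal
      + (μ {ω | C ω = (1:ℤ) ∧ Ys ω = -1}).toReal = (μ {ω | C ω = (1:ℤ)}).toReal := by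
    rw [hinter, hinter]; exact hsplit _ (hCmeas 1)
  have hsum2 : (μ {ω | C ω = (-1:ℤ) ∧ Ys ω = 1}).toReal
      + (μ {ω | C ω = (-1:ℤ) ∧ Ys ω = -1}).toReal = (μ {ω | C ω = (-1:ℤ)}).toReal := by
    rw [hinter, hinter]; exact hsplit _ (hCmeas (-1))
  -- total mass
  have htot : (μ {ω | C ω = (1:ℤ)}).toReal + (μ {ω | C ω = (-1:ℤ)}).toReal = 1 := by
    rw [← ENNReal.toReal_add (measure_ne_top _ _) (measure_ne_top _ _),
      ← measure_union ?_ (hCmeas _)]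
    · have : {ω | C ω = (1:ℤ)} ∪ {ω | C ω = (-1:ℤ)} = Set.univ := by
        ext ω; simp only [Set.mem_union, Set.mem_setOf_eq, Set.mem_univ, iff_true]
        exact hCr ω
      rw [this, measure_univ]; simp
    · rw [Set.disjoint_left]
      intro ω h1 h2
      simp only [Set.mem_setOf_eq] at h1 h2
      omega
  -- per-term bounds
  have hb : ∀ y y' : ℤ, (y = 1 ∨ y = -1) →
      (μ {ω | C ω = y ∧ Ys ω = y'}).toReal *
        f ((μ {ω | C ω = y ∧ Ys ω = y'}).toReal
          / ((μ {ω | C ω = y}).toReal * (μ {ω | Ys ω = y'}).toReal))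
      ≤ (μ {ω | C ω = y ∧ Ys ω = y'}).toReal * f 2 := by
    intro y y' hy
    have hy' : (μ {ω | Ys ω = y'}).toReal ≤ 1 / 2 ∨ True := Or.inr trivial
    have hq := hCpos y hy
    have hple : (μ {ω | C ω = y ∧ Ys ω = y'}).toReal ≤ (μ {ω | C ω = y}).toReal := by
      refine ENNReal.toReal_mono (measure_ne_top _ _) (measure_mono ?_)
      intro ω hω; exact hω.1
    rcases eq_or_ne y' 1 with h | h
    · subst h; rw [hbal1]; exact key _ _ ENNReal.toReal_nonneg hple hq
    · rcases eq_or_ne y' (-1) with h2 | h2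
      · subst h2; rw [hbal2]; exact key _ _ ENNReal.toReal_nonneg hple hq
      · have : {ω | C ω = y ∧ Ys ω = y'} = (∅ : Set Ω) := by
          ext ω
          simp only [Set.mem_setOf_eq, Set.mem_empty_iff_false, iff_false, not_and]
          intro _
          rcases hYr ω with hh | hh <;> simp [hh] <;> omega
        simp [this]
  calc Df C = _ := hDf C
    _ ≤ (μ {ω | C ω = (-1:ℤ) ∧ Ys ω = -1}).toReal * f 2
          + (μ {ω | C ω = (-1:ℤ) ∧ Ys ω = 1}).toReal * f 2
          + (μ {ω | C ω = (1:ℤ) ∧ Ys ω = -1}).toReal * f 2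
          + (μ {ω | C ω = (1:ℤ) ∧ Ys ω = 1}).toReal * f 2 := by
        rw [Finset.sum_pair hne, Finset.sum_pair hne, Finset.sum_pair hne]
        have b1 := hb (-1) (-1) (Or.inr rfl)
        have b2 := hb (-1) 1 (Or.inr rfl)
        have b3 := hb 1 (-1) (Or.inl rfl)
        have b4 := hb 1 1 (Or.inl rfl)
        linarith
    _ = ((μ {ω | C ω = (-1:ℤ) ∧ Ys ω = -1}).toReal
          + (μ {ω | C ω = (-1:ℤ) ∧ Ys ω = 1}).toReal
          + (μ {ω | C ω = (1:ℤ) ∧ Ys ω = -1}).toReal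
          + (μ {ω | C ω = (1:ℤ) ∧ Ys ω = 1}).toReal) * f 2 := by ring
    _ = f 2 := by
        have : (μ {ω | C ω = (-1:ℤ) ∧ Ys ω = -1}).toReal
          + (μ {ω | C ω = (-1:ℤ) ∧ Ys ω = 1}).toReal
          + (μ {ω | C ω = (1:ℤ) ∧ Ys ω = -1}).toReal
          + (μ {ω | C ω = (1:ℤ) ∧ Ys ω = 1}).toReal = 1 := by
          linarith [hsum1, hsum2, htot]
        rw [this, one_mul]
    _ = Df Hs := hDfHs.symm
end
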